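/- Let q be a positive integer that is not a perfect square, and let h be a q-Weil polynomial of degree 4 with a real root and with coefficient a = 0 of x^3 (equivalently, with sum of roots 0); then h(x) = x^4 − 2q x^2 + q^2 = (x^2 − q)^2. More generally, every q-Weil polynomial of degree 4 with a real root is either (x^2 − q)^2, or (when q is a perfect square) of the form (x ± √q)^2 h_0(x) with h_0 a q-Weil polynomial of degree 2. -/

import Mathlib

open Polynomial

/-- `h` is a `q`-Weil polynomial of degree `2*g`: its complex roots consist of
`g` conjugate pairs, each of complex absolute value `√q`. -/
def IsWeil (q g : ℕ) (h : Polynomial ℤ) : Prop :=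
  ∃ w : Fin g → ℂ,
    (∀ i, ‖w i‖ = Real.sqrt q) ∧
    h.map (Int.castRingHom ℂ) =
      ∏ i, ((Polynomial.X - Polynomial.C (w i)) *
            (Polynomial.X - Polynomial.C ((starRingEnd ℂ) (w i))))

/-!
If `x` is a real root of a quartic `q`-Weil polynomial `h`, then `x` is one of the conjugate
pairs, so `x ^ 2 = q` and `h = (X - x)² (X² - t X + q)` over `ℝ` with `t` the trace of the other
pair. Comparing the coefficients `a₃`, `a₂` of `X³`, `X²` gives `2 x · a₃ = -a₂ - 2q ∈ ℤ`.
If `q` is not a square, `x = ±√q` is irrational, which forces `a₃ = 0`, hence `t = -2x` and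
`h = (X² - q)²`. If `q = s²`, then `x = ±s`, `t = -a₃ - 2x` is an integer, and the second
factor is a `q`-Weil polynomial of degree 2 over `ℤ`.
-/

open ComplexConjugate

lemma X_sub_C_mul_X_sub_C_conj (w : ℂ) :
    (X - C w) * (X - C (conj w)) =
      (X ^ 2 - C (2 * w.re) * X + C (Complex.normSq w)).map Complex.ofRealHom := by
  simp only [Polynomial.map_add, Polynomial.map_sub, Polynomial.map_mul, Polynomial.map_pow,
    map_X, map_C, Complex.ofRealHom_eq_coe, ← Complex.add_conj, ← Complex.mul_conj]
  simp only [C_add, C_mul]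
  ring

lemma eq_ofReal_of_isRoot_X_sub_C_mul_X_sub_C_conj {w : ℂ} {x : ℝ}
    (hx : ((X - C w) * (X - C (conj w))).IsRoot (x : ℂ)) : w = x := by
  rcases root_mul.1 hx with hw | hw <;> simp only [IsRoot, eval_sub, eval_X, eval_C,
    sub_eq_zero] at hw
  · exact hw.symm
  · rw [← Complex.conj_conj w, ← hw, Complex.conj_ofReal]

lemma coeff_X_sub_C_sq_mul_quadratic {R : Type*} [CommRing R] (x t n : R) :
    ((X - C x) ^ 2 * (X ^ 2 - C t * X + C n)).coeff 3 = -(2 * x + t) ∧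
      ((X - C x) ^ 2 * (X ^ 2 - C t * X + C n)).coeff 2 = x ^ 2 + 2 * x * t + n := by
  have hexp : (X - C x) ^ 2 * (X ^ 2 - C t * X + C n) =
      X ^ 4 - C (2 * x + t) * X ^ 3 + C (x ^ 2 + 2 * x * t + n) * X ^ 2
        - C (x ^ 2 * t + 2 * x * n) * X + C (x ^ 2 * n) := by
    simp only [C_add, C_mul, C_pow, C_ofNat]; ring
  rw [hexp]
  constructor <;> simp only [coeff_add, coeff_sub, coeff_C_mul, coeff_X_pow, coeff_C, coeff_X] <;>
    norm_num

lemma map_intCastRingHom_complex (h : ℤ[X]) :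
    h.map (Int.castRingHom ℂ) = (h.map (Int.castRingHom ℝ)).map Complex.ofRealHom := by
  rw [map_map]; congr 1

lemma map_eq_of_isRoot_X_sub_C_mul_X_sub_C_conj {q : ℕ} {h : ℤ[X]} {a b : ℂ} {x : ℝ}
    (ha : ‖a‖ = √q) (hb : ‖b‖ = √q)
    (hab : h.map (Int.castRingHom ℂ) =
      (X - C a) * (X - C (conj a)) * ((X - C b) * (X - C (conj b))))
    (hxa : ((X - C a) * (X - C (conj a))).IsRoot (x : ℂ)) :
    x ^ 2 = q ∧
      h.map (Int.castRingHom ℝ) = (X - C x) ^ 2 * (X ^ 2 - C (2 * b.re) * X + C (q : ℝ)) := by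
  obtain rfl := eq_ofReal_of_isRoot_X_sub_C_mul_X_sub_C_conj hxa
  have hnormSq : Complex.normSq b = q := by
    rw [Complex.normSq_eq_norm_sq, hb, Real.sq_sqrt (Nat.cast_nonneg q)]
  refine ⟨?_, map_injective Complex.ofRealHom Complex.ofReal_injective ?_⟩
  · rw [Complex.norm_real, Real.norm_eq_abs] at ha
    rw [← sq_abs, ha, Real.sq_sqrt (Nat.cast_nonneg q)]
  · rw [← map_intCastRingHom_complex, hab, X_sub_C_mul_X_sub_C_conj b, hnormSq,
      Complex.conj_ofReal, Polynomial.map_mul]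
    simp [sq]

lemma IsWeil.exists_map_eq_of_aeval_eq_zero {q : ℕ} {h : ℤ[X]} (hW : IsWeil q 2 h) {x : ℝ}
    (hx : aeval x h = 0) :
    x ^ 2 = q ∧ ∃ w : ℂ, ‖w‖ = √q ∧
      h.map (Int.castRingHom ℝ) = (X - C x) ^ 2 * (X ^ 2 - C (2 * w.re) * X + C (q : ℝ)) := by
  obtain ⟨w, hw, hmap⟩ := hW
  rw [Fin.prod_univ_two] at hmap
  have hroot : (h.map (Int.castRingHom ℂ)).IsRoot (x : ℂ) := by
    have := aeval_algebraMap_apply ℂ x h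
    rwa [hx, map_zero, aeval_def, algebraMap_int_eq, ← eval_map] at this
  rw [hmap] at hroot
  rcases root_mul.1 hroot with h0 | h1
  · obtain ⟨hxq, hh⟩ := map_eq_of_isRoot_X_sub_C_mul_X_sub_C_conj (hw 0) (hw 1) hmap h0
    exact ⟨hxq, w 1, hw 1, hh⟩
  · obtain ⟨hxq, hh⟩ := map_eq_of_isRoot_X_sub_C_mul_X_sub_C_conj (hw 1) (hw 0)
      (hmap.trans (mul_comm _ _)) h1
    exact ⟨hxq, w 0, hw 0, hh⟩

lemma eq_X_sq_sub_C_sq_of_map_eq {q : ℕ} (hq : ¬ IsSquare q) {h : ℤ[X]} {x t : ℝ}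
    (hx : x ^ 2 = q)
    (hh : h.map (Int.castRingHom ℝ) = (X - C x) ^ 2 * (X ^ 2 - C t * X + C (q : ℝ))) :
    h = (X ^ 2 - C (q : ℤ)) ^ 2 := by
  obtain ⟨h3, h2⟩ := coeff_X_sub_C_sq_mul_quadratic x t (q : ℝ)
  rw [← hh, coeff_map, eq_intCast] at h3 h2
  have hirr : Irrational x := by
    have habs : |x| = √q := by rw [← Real.sqrt_sq_eq_abs, hx]
    rcases abs_choice x with hx' | hx' <;> rw [hx'] at habs
    · exact habs ▸ irrational_sqrt_natCast_iff.2 hq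
    · exact (habs ▸ irrational_sqrt_natCast_iff.2 hq).of_neg
  have h3zero : h.coeff 3 = 0 := by
    by_contra hne
    refine (hirr.mul_intCast (mul_ne_zero two_ne_zero hne)).ne_int (-h.coeff 2 - 2 * q) ?_
    push_cast
    linear_combination 2 * x * h3 + h2 - 3 * hx
  have ht : t = -2 * x := by rw [h3zero, Int.cast_zero] at h3; linarith
  apply map_injective (Int.castRingHom ℝ) Int.cast_injective
  rw [hh, ht]
  simp only [Polynomial.map_pow, Polynomial.map_sub, map_X, map_C, Int.coe_castRingHom,
    Int.cast_natCast, ← hx, C_neg, C_mul, C_pow, C_ofNat]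
  ring

lemma exists_eq_X_sub_C_sq_mul_of_map_eq {h : ℤ[X]} {k : ℤ} {n : ℕ} {t : ℝ}
    (hh : h.map (Int.castRingHom ℝ) = (X - C (k : ℝ)) ^ 2 * (X ^ 2 - C t * X + C (n : ℝ))) :
    ∃ m : ℤ, (m : ℝ) = t ∧ h = (X - C k) ^ 2 * (X ^ 2 - C m * X + C (n : ℤ)) := by
  obtain ⟨h3, -⟩ := coeff_X_sub_C_sq_mul_quadratic (k : ℝ) t (n : ℝ)
  rw [← hh, coeff_map, eq_intCast] at h3
  refine ⟨-h.coeff 3 - 2 * k, by push_cast; linarith,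
    map_injective (Int.castRingHom ℝ) Int.cast_injective ?_⟩
  rw [hh]
  simp only [Polynomial.map_mul, Polynomial.map_add, Polynomial.map_pow, Polynomial.map_sub,
    map_X, map_C, Int.coe_castRingHom]
  push_cast
  rw [h3, neg_neg, add_sub_cancel_left]

lemma isWeil_one_X_sq_sub_C_mul_X_add_C {q : ℕ} {w : ℂ} (hw : ‖w‖ = √q) {m : ℤ}
    (hm : (m : ℝ) = 2 * w.re) : IsWeil q 1 (X ^ 2 - C m * X + C (q : ℤ)) := by
  refine ⟨fun _ => w, fun _ => hw, ?_⟩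
  rw [Fin.prod_univ_one, X_sub_C_mul_X_sub_C_conj, Complex.normSq_eq_norm_sq, hw,
    Real.sq_sqrt (Nat.cast_nonneg q), ← hm]
  simp

theorem stmt17_general (q : ℕ) (h : Polynomial ℤ) (hW : IsWeil q 2 h)
    (hrr : ∃ x : ℝ, Polynomial.aeval x h = 0) :
    (¬ IsSquare q → h.coeff 3 = 0 → h = (X ^ 2 - C (q : ℤ)) ^ 2) ∧
    (h = (X ^ 2 - C (q : ℤ)) ^ 2 ∨
      ∃ s : ℕ, s ^ 2 = q ∧ ∃ h0 : Polynomial ℤ, IsWeil q 1 h0 ∧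
        (h = (X + C (s : ℤ)) ^ 2 * h0 ∨ h = (X - C (s : ℤ)) ^ 2 * h0)) := by
  obtain ⟨x, hx⟩ := hrr
  obtain ⟨hxq, w, hw, hmap⟩ := hW.exists_map_eq_of_aeval_eq_zero hx
  by_cases hsq : IsSquare q
  · obtain ⟨s, hs⟩ := hsq
    refine ⟨fun hns => absurd ⟨s, hs⟩ hns, Or.inr ⟨s, by rw [hs, sq], ?_⟩⟩
    have hxs : x ^ 2 = (s : ℝ) ^ 2 := by rw [hxq, hs]; push_cast; ring
    rcases sq_eq_sq_iff_eq_or_eq_neg.1 hxs with rfl | rfl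
    · obtain ⟨m, hm, rfl⟩ := exists_eq_X_sub_C_sq_mul_of_map_eq (k := s)
        (by exact_mod_cast hmap)
      exact ⟨_, isWeil_one_X_sq_sub_C_mul_X_add_C hw hm, Or.inr rfl⟩
    · obtain ⟨m, hm, rfl⟩ := exists_eq_X_sub_C_sq_mul_of_map_eq (k := -s)
        (by exact_mod_cast hmap)
      exact ⟨_, isWeil_one_X_sq_sub_C_mul_X_add_C hw hm, Or.inl (by rw [C_neg, sub_neg_eq_add])⟩
  · have hh := eq_X_sq_sub_C_sq_of_map_eq hsq hxq hmap
    exact ⟨fun _ _ => hh, Or.inl hh⟩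

theorem stmt17 (q : ℕ) (hq : 0 < q) (h : Polynomial ℤ) (hW : IsWeil q 2 h)
    (hrr : ∃ x : ℝ, Polynomial.aeval x h = 0) :
    (¬ IsSquare q → h.coeff 3 = 0 → h = (X ^ 2 - C (q : ℤ)) ^ 2) ∧
    (h = (X ^ 2 - C (q : ℤ)) ^ 2 ∨
      ∃ s : ℕ, s ^ 2 = q ∧ ∃ h0 : Polynomial ℤ, IsWeil q 1 h0 ∧
        (h = (X + C (s : ℤ)) ^ 2 * h0 ∨ h = (X - C (s : ℤ)) ^ 2 * h0)) :=
  stmt17_general q h hW hrr
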